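/- arXiv:1603.07398 — 9 statements merged into one kernel-verified Lean document; each statement's English description precedes it below -/
import Mathlib

section
/- Let D = (X, 𝓑) be a 2-(v,k,λ) design. Then the domination number of the incidence graph of D satisfies γ(D) ≥ ⌈(2v − 1 − (k−1)/λ) / k⌉, where the fraction is computed in the rationals and ⌈·⌉ is the ceiling. -/
open Finset

variable {α : Type*} [DecidableEq α]

/-- `IsDesign X Bl v k lam` : `(X, Bl)` is a 2-(v,k,λ) design: `X` has `v` points,
every block is a `k`-subset of `X`, `v ≥ k ≥ 2`, `λ ≥ 1`, and any two distinct
points lie in exactly `λ` common blocks. -/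
structure IsDesign (X : Finset α) (Bl : Finset (Finset α)) (v k lam : ℕ) : Prop where
  two_le_k : 2 ≤ k
  k_le_v : k ≤ v
  one_le_lam : 1 ≤ lam
  card_points : X.card = v
  block_subset : ∀ b ∈ Bl, b ⊆ X
  block_card : ∀ b ∈ Bl, b.card = k
  pair_count : ∀ x ∈ X, ∀ y ∈ X, x ≠ y →
    (Bl.filter (fun b => x ∈ b ∧ y ∈ b)).card = lam

/-- `IsDomSet X Bl P L` : the vertex set of the incidence graph of `(X, Bl)`
consisting of the points `P` and the blocks `L` is a dominating set: every point
of `X` not in `P` lies in some block of `L`, and every block of `Bl` not in `L`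
contains some point of `P`. -/
def IsDomSet (X : Finset α) (Bl : Finset (Finset α))
    (P : Finset α) (L : Finset (Finset α)) : Prop :=
  P ⊆ X ∧ L ⊆ Bl ∧
    (∀ x ∈ X, x ∉ P → ∃ b ∈ L, x ∈ b) ∧
    (∀ b ∈ Bl, b ∉ L → ∃ x ∈ P, x ∈ b)

/-- The domination number of the incidence graph of `(X, Bl)`: the minimum total
cardinality `|P| + |L|` of a dominating set (points `P`, blocks `L`). -/
noncomputable def gamma (X : Finset α) (Bl : Finset (Finset α)) : ℕ :=
  sInf {n | ∃ P L, IsDomSet X Bl P L ∧ P.card + L.card = n}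

/-- Double counting incidences between a set of points and a set of blocks. -/
lemma dc_aux {α : Type*} [DecidableEq α] (S : Finset α) (T : Finset (Finset α)) :
    ∑ z ∈ S, (T.filter (fun b => z ∈ b)).card
      = ∑ b ∈ T, (S.filter (fun z => z ∈ b)).card := by
  simp_rw [card_filter]
  exact Finset.sum_comm

theorem stmt_0 (X : Finset α) (Bl : Finset (Finset α)) (v k lam : ℕ)
    (hD : IsDesign X Bl v k lam) :
    ⌈(2 * (v : ℚ) - 1 - ((k : ℚ) - 1) / (lam : ℚ)) / (k : ℚ)⌉ ≤ (gamma X Bl : ℤ) := by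
  obtain ⟨h2k, hkv, hlam, hX, hBsub, hBcard, hpair⟩ := hD
  obtain ⟨c, rfl⟩ : ∃ c, k = c + 1 := ⟨k - 1, by omega⟩
  obtain ⟨a, rfl⟩ : ∃ a, v = a + 1 := ⟨v - 1, by omega⟩
  have hc1 : 1 ≤ c := by omega
  -- the defining set of gamma is nonempty
  have hne : {n | ∃ P L, IsDomSet X Bl P L ∧ P.card + L.card = n}.Nonempty := by
    refine ⟨X.card + (∅ : Finset (Finset α)).card, X, ∅,
      ⟨subset_rfl, empty_subset _, ?_, ?_⟩, rfl⟩
    · intro x hx hx'; exact absurd hx hx'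
    · intro b hb _
      have hcard := hBcard b hb
      have hbne : b.Nonempty := by rw [← Finset.card_pos, hcard]; omega
      obtain ⟨x, hx⟩ := hbne
      exact ⟨x, hBsub b hb hx, hx⟩
  obtain ⟨P, L, ⟨hPX, hLB, hdomP, hdomB⟩, hn⟩ := Nat.sInf_mem hne
  have hn' : P.card + L.card = gamma X Bl := hn
  set n := gamma X Bl with hgam
  -- basic coverage inequality : v ≤ p + k·l
  have hcover : X ⊆ P ∪ L.biUnion id := by
    intro x hx
    by_cases hxP : x ∈ P
    · exact mem_union_left _ hxP
    · obtain ⟨b, hbL, hxb⟩ := hdomP x hx hxP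
      exact mem_union_right _ (mem_biUnion.mpr ⟨b, hbL, hxb⟩)
  have h1 : a + 1 ≤ P.card + (c + 1) * L.card := by
    calc a + 1 = X.card := hX.symm
      _ ≤ (P ∪ L.biUnion id).card := card_le_card hcover
      _ ≤ P.card + (L.biUnion id).card := card_union_le _ _
      _ ≤ P.card + ∑ b ∈ L, (id b).card := by gcongr; exact card_biUnion_le
      _ = P.card + ∑ b ∈ L, (c + 1) := by
          congr 1; exact Finset.sum_congr rfl fun b hb => hBcard b (hLB hb)
      _ = P.card + (c + 1) * L.card := by rw [sum_const, smul_eq_mul, mul_comm]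
  -- the key combinatorial inequality, in ℕ
  have key : lam * (2 * (a + 1)) ≤ lam * ((c + 1) * n) + c + lam := by
    by_cases hA : ∃ y ∈ X \ P, (L.filter (fun b => y ∈ b)).card ≤ 1
    · -- Case A : some point outside P lies in at most one block of L
      obtain ⟨y, hySP, hly⟩ := hA
      obtain ⟨hyX, hyP⟩ := mem_sdiff.mp hySP
      -- replication number count : r * c = lam * a
      have hr : (Bl.filter (fun b => y ∈ b)).card * c = lam * a := by
        have e1 : ∑ z ∈ X.erase y, (Bl.filter (fun b => y ∈ b ∧ z ∈ b)).card
            = lam * a := by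
          rw [Finset.sum_congr rfl (fun z hz => hpair y hyX z (mem_of_mem_erase hz)
            ((mem_erase.mp hz).1.symm)), sum_const, card_erase_of_mem hyX, hX,
            smul_eq_mul]
          simp [mul_comm]
        have e2 : ∑ z ∈ X.erase y, (Bl.filter (fun b => y ∈ b ∧ z ∈ b)).card
            = ∑ b ∈ Bl.filter (fun b => y ∈ b), ((X.erase y).filter (fun z => z ∈ b)).card := by
          simp_rw [← filter_filter]
          exact dc_aux _ _
        have e3 : ∀ b ∈ Bl.filter (fun b => y ∈ b),
            ((X.erase y).filter (fun z => z ∈ b)).card = c := by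
          intro b hb
          obtain ⟨hbBl, hyb⟩ := mem_filter.mp hb
          have : (X.erase y).filter (fun z => z ∈ b) = b.erase y := by
            ext z
            simp only [mem_filter, mem_erase]
            exact ⟨fun h => ⟨h.1.1, h.2⟩, fun h => ⟨⟨h.1, hBsub b hbBl h.2⟩, h.2⟩⟩
          rw [this, card_erase_of_mem hyb, hBcard b hbBl]
          omega
        rw [e2, Finset.sum_congr rfl e3, sum_const, smul_eq_mul] at e1
        exact e1
      -- every block through y is in L or contains a point of P
      have hsub : Bl.filter (fun b => y ∈ b) ⊆
          L.filter (fun b => y ∈ b) ∪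
            P.biUnion (fun x => Bl.filter (fun b => x ∈ b ∧ y ∈ b)) := by
        intro b hb
        obtain ⟨hbBl, hyb⟩ := mem_filter.mp hb
        by_cases hbL : b ∈ L
        · exact mem_union_left _ (mem_filter.mpr ⟨hbL, hyb⟩)
        · obtain ⟨x, hxP, hxb⟩ := hdomB b hbBl hbL
          exact mem_union_right _ (mem_biUnion.mpr ⟨x, hxP,
            mem_filter.mpr ⟨hbBl, hxb, hyb⟩⟩)
      have hrb : (Bl.filter (fun b => y ∈ b)).card ≤ 1 + P.card * lam := by
        calc (Bl.filter (fun b => y ∈ b)).card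
            ≤ (L.filter (fun b => y ∈ b) ∪
                P.biUnion (fun x => Bl.filter (fun b => x ∈ b ∧ y ∈ b))).card :=
              card_le_card hsub
          _ ≤ (L.filter (fun b => y ∈ b)).card +
                (P.biUnion (fun x => Bl.filter (fun b => x ∈ b ∧ y ∈ b))).card :=
              card_union_le _ _
          _ ≤ 1 + ∑ x ∈ P, (Bl.filter (fun b => x ∈ b ∧ y ∈ b)).card := by
              gcongr
              exact card_biUnion_le
          _ = 1 + ∑ x ∈ P, lam := by
              congr 1
              refine Finset.sum_congr rfl fun x hx => ?_
              exact hpair x (hPX hx) y hyX (fun h => hyP (h ▸ hx))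
          _ = 1 + P.card * lam := by rw [sum_const, smul_eq_mul]
      have hra : lam * a ≤ (1 + P.card * lam) * c := by
        rw [← hr]; exact Nat.mul_le_mul_right c hrb
      have hmul : lam * (a + 1) ≤ lam * (P.card + (c + 1) * L.card) :=
        Nat.mul_le_mul_left lam h1
      rw [← hn']
      nlinarith [hra, hmul]
    · -- Case B : every point outside P lies in at least two blocks of L
      push_neg at hA
      have h2 : 2 * (X \ P).card ≤ (c + 1) * L.card := by
        calc 2 * (X \ P).card = ∑ _y ∈ X \ P, 2 := by rw [sum_const, smul_eq_mul, mul_comm]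
          _ ≤ ∑ y ∈ X \ P, (L.filter (fun b => y ∈ b)).card :=
              Finset.sum_le_sum fun y hy => hA y hy
          _ = ∑ b ∈ L, ((X \ P).filter (fun z => z ∈ b)).card := dc_aux _ _
          _ ≤ ∑ b ∈ L, b.card :=
              Finset.sum_le_sum fun b _ =>
                card_le_card (fun z hz => (mem_filter.mp hz).2)
          _ = ∑ b ∈ L, (c + 1) := Finset.sum_congr rfl fun b hb => hBcard b (hLB hb)
          _ = (c + 1) * L.card := by rw [sum_const, smul_eq_mul, mul_comm]
      have hsd : (X \ P).card = a + 1 - P.card := by rw [card_sdiff_of_subset hPX, hX]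
      have hple : P.card ≤ a + 1 := hX ▸ card_le_card hPX
      rw [hsd] at h2
      have h3 : 2 * (a + 1) ≤ 2 * P.card + (c + 1) * L.card := by omega
      have h4 : 2 * (a + 1) ≤ (c + 1) * (P.card + L.card) := by nlinarith
      rw [← hn']
      nlinarith [Nat.mul_le_mul_left lam h4]
  -- now conclude over ℚ
  have hl0 : (0 : ℚ) < (lam : ℚ) := by exact_mod_cast hlam
  have hk0 : (0 : ℚ) < ((c : ℚ) + 1) := by positivity
  rw [Int.ceil_le]
  push_cast
  rw [div_le_iff₀ hk0]
  have hkey : (lam : ℚ) * (2 * ((a : ℚ) + 1)) ≤ lam * (((c : ℚ) + 1) * n) + c + lam := by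
    exact_mod_cast key
  have hexp : (2 * ((a : ℚ) + 1) - 1 - ((c : ℚ) + 1 - 1) / lam) * lam
      = lam * (2 * ((a : ℚ) + 1)) - lam - c := by
    field_simp
    ring
  have hmain : (2 * ((a : ℚ) + 1) - 1 - ((c : ℚ) + 1 - 1) / lam) * lam
      ≤ ((n : ℚ) * ((c : ℚ) + 1)) * lam := by
    rw [hexp]
    nlinarith [hkey]
  exact le_of_mul_le_mul_right hmain hl0
end

section
/- Let D = (X, 𝓑) be a non-symmetric 2-(v,k,1) design (i.e., the number of blocks b satisfies b > v). Then 2k − 1 ≤ γ(D) ≤ (v − k²)(v − 1)/(k(k−1)) + 2k − 1. -/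
open Finset

variable {α : Type*} [DecidableEq α]

variable {X : Finset α} {Bl : Finset (Finset α)} {v k : ℕ}

lemma pair_unique (hD : IsDesign X Bl v k 1) {x y : α} (hx : x ∈ X) (hy : y ∈ X) (hxy : x ≠ y)
    {b₁ b₂ : Finset α} (hb₁ : b₁ ∈ Bl) (hb₂ : b₂ ∈ Bl)
    (hx₁ : x ∈ b₁) (hy₁ : y ∈ b₁) (hx₂ : x ∈ b₂) (hy₂ : y ∈ b₂) : b₁ = b₂ := by
  have h := hD.pair_count x hx y hy hxy
  exact Finset.card_le_one.mp h.le b₁ (by simp [Finset.mem_filter, hb₁, hx₁, hy₁])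
    b₂ (by simp [Finset.mem_filter, hb₂, hx₂, hy₂])

lemma pair_exists (hD : IsDesign X Bl v k 1) {x y : α} (hx : x ∈ X) (hy : y ∈ X) (hxy : x ≠ y) :
    ∃ b ∈ Bl, x ∈ b ∧ y ∈ b := by
  have h := hD.pair_count x hx y hy hxy
  obtain ⟨b, hb⟩ := Finset.card_pos.mp (by rw [h]; norm_num)
  simp only [Finset.mem_filter] at hb
  exact ⟨b, hb.1, hb.2⟩

lemma repl (hD : IsDesign X Bl v k 1) {x : α} (hx : x ∈ X) :
    (Bl.filter (fun b => x ∈ b)).card * (k - 1) = v - 1 := by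
  have hpart : X.erase x = (Bl.filter (fun b => x ∈ b)).biUnion (fun b => b.erase x) := by
    ext y
    simp only [Finset.mem_erase, Finset.mem_biUnion, Finset.mem_filter]
    constructor
    · rintro ⟨hyx, hyX⟩
      obtain ⟨b, hb, hxb, hyb⟩ := pair_exists hD hx hyX (Ne.symm hyx)
      exact ⟨b, ⟨hb, hxb⟩, hyx, hyb⟩
    · rintro ⟨b, ⟨hbBl, _⟩, hyx, hyb⟩
      exact ⟨hyx, hD.block_subset b hbBl hyb⟩
  have hdisj : ∀ b₁ ∈ Bl.filter (fun b => x ∈ b), ∀ b₂ ∈ Bl.filter (fun b => x ∈ b),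
      b₁ ≠ b₂ → Disjoint (b₁.erase x) (b₂.erase x) := by
    intro b₁ h₁ b₂ h₂ hne
    simp only [Finset.mem_filter] at h₁ h₂
    rw [Finset.disjoint_left]
    intro y hy₁ hy₂
    simp only [Finset.mem_erase] at hy₁ hy₂
    exact hne (pair_unique hD hx (hD.block_subset _ h₁.1 hy₁.2) (Ne.symm hy₁.1)
      h₁.1 h₂.1 h₁.2 hy₁.2 h₂.2 hy₂.2)
  have hcb := Finset.card_biUnion hdisj
  rw [← hpart, Finset.card_erase_of_mem hx, hD.card_points] at hcb
  rw [hcb]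
  rw [Finset.sum_congr rfl (fun b hb => ?_), Finset.sum_const, smul_eq_mul]
  simp only [Finset.mem_filter] at hb
  rw [Finset.card_erase_of_mem hb.2, hD.block_card _ hb.1]

lemma incidence (hD : IsDesign X Bl v k 1) :
    Bl.card * k = ∑ x ∈ X, (Bl.filter (fun b => x ∈ b)).card := by
  calc Bl.card * k = ∑ b ∈ Bl, b.card := by
        rw [Finset.sum_congr rfl hD.block_card, Finset.sum_const, smul_eq_mul]
      _ = ∑ b ∈ Bl, ∑ x ∈ X, (if x ∈ b then 1 else 0) := by
        refine Finset.sum_congr rfl fun b hb => ?_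
        rw [← Finset.card_filter]
        congr 1
        ext y
        simp only [Finset.mem_filter]
        exact ⟨fun h => ⟨hD.block_subset b hb h, h⟩, fun h => h.2⟩
      _ = ∑ x ∈ X, (Bl.filter (fun b => x ∈ b)).card := by
        rw [Finset.sum_comm]
        refine Finset.sum_congr rfl fun x hx => ?_
        rw [Finset.card_filter]

theorem stmt_1 (X : Finset α) (Bl : Finset (Finset α)) (v k : ℕ)
    (hD : IsDesign X Bl v k 1) (hnonsym : v < Bl.card) :
    2 * k - 1 ≤ gamma X Bl ∧
      (gamma X Bl : ℚ) ≤
        ((v : ℚ) - (k : ℚ) ^ 2) * ((v : ℚ) - 1) / ((k : ℚ) * ((k : ℚ) - 1))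
          + 2 * (k : ℚ) - 1 := by
  have hk2 : 2 ≤ k := hD.two_le_k
  have hv0 : 0 < v := lt_of_lt_of_le (by omega) hD.k_le_v
  obtain ⟨x₀, hx₀⟩ : X.Nonempty := Finset.card_pos.mp (by rw [hD.card_points]; omega)
  set r := (Bl.filter (fun b => x₀ ∈ b)).card with hr_def
  have hr : r * (k - 1) = v - 1 := repl hD hx₀
  have hrx : ∀ x ∈ X, (Bl.filter (fun b => x ∈ b)).card = r := by
    intro x hx
    exact Nat.eq_of_mul_eq_mul_right (by omega) ((repl hD hx).trans hr.symm)
  have hbk : Bl.card * k = v * r := by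
    rw [incidence hD, Finset.sum_congr rfl hrx, Finset.sum_const, smul_eq_mul, hD.card_points]
  have hrk : k + 1 ≤ r := by
    by_contra h
    push_neg at h
    have h1 : Bl.card * k ≤ v * k := by
      rw [hbk]; exact Nat.mul_le_mul_left v (by omega)
    have := Nat.le_of_mul_le_mul_right h1 (by omega : 0 < k)
    omega
  have hvk : k * k ≤ v := by
    obtain ⟨m, rfl⟩ : ∃ m, k = m + 2 := ⟨k - 2, by omega⟩
    have h1 : (m + 3) * (m + 1) ≤ r * (m + 1) := Nat.mul_le_mul_right _ (by omega)
    have h2 : r * (m + 1) = v - 1 := by simpa using hr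
    have h2' : r * (m + 1) + 1 = v := by rw [h2]; omega
    nlinarith [h1, h2']
  have hbrk : r * k ≤ Bl.card := by
    have h1 : (r * k) * k ≤ Bl.card * k := by
      rw [hbk]
      calc (r * k) * k = r * (k * k) := by ring
        _ ≤ r * v := Nat.mul_le_mul_left r hvk
        _ = v * r := mul_comm r v
    exact Nat.le_of_mul_le_mul_right h1 (by omega)
  -- upper bound construction
  obtain ⟨B, hB⟩ : Bl.Nonempty := Finset.card_pos.mp (by omega)
  set L0 := Bl.filter (fun c => c ∩ B = ∅) with hL0_def
  have hdom : IsDomSet X Bl B L0 := by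
    refine ⟨hD.block_subset B hB, Finset.filter_subset _ _, ?_, ?_⟩
    · intro x hx hxB
      -- blocks through x meeting B are at most k, but x is on r > k blocks
      have hT : (Bl.filter (fun c => x ∈ c)).card = r := hrx x hx
      have hmeet : ((Bl.filter (fun c => x ∈ c)).filter (fun c => ¬ (c ∩ B = ∅))).card ≤ k := by
        have hsub : (Bl.filter (fun c => x ∈ c)).filter (fun c => ¬ (c ∩ B = ∅)) ⊆
            B.biUnion (fun y => Bl.filter (fun c => x ∈ c ∧ y ∈ c)) := by
          intro c hc
          simp only [Finset.mem_filter] at hc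
          obtain ⟨⟨hcBl, hxc⟩, hne⟩ := hc
          obtain ⟨y, hy⟩ := Finset.nonempty_iff_ne_empty.mpr hne
          rw [Finset.mem_inter] at hy
          exact Finset.mem_biUnion.mpr ⟨y, hy.2, Finset.mem_filter.mpr ⟨hcBl, hxc, hy.1⟩⟩
        calc ((Bl.filter (fun c => x ∈ c)).filter (fun c => ¬ (c ∩ B = ∅))).card
            ≤ (B.biUnion (fun y => Bl.filter (fun c => x ∈ c ∧ y ∈ c))).card :=
              Finset.card_le_card hsub
          _ ≤ ∑ y ∈ B, (Bl.filter (fun c => x ∈ c ∧ y ∈ c)).card := Finset.card_biUnion_le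
          _ = ∑ y ∈ B, 1 := by
              refine Finset.sum_congr rfl fun y hy => ?_
              exact hD.pair_count x hx y (hD.block_subset B hB hy)
                (fun h => hxB (h ▸ hy))
          _ = k := by rw [Finset.sum_const, smul_eq_mul, mul_one, hD.block_card B hB]
      have hsplit := Finset.card_filter_add_card_filter_not
        (s := Bl.filter (fun c => x ∈ c)) (p := fun c => c ∩ B = ∅)
      have hpos : 0 < ((Bl.filter (fun c => x ∈ c)).filter (fun c => c ∩ B = ∅)).card := by
        omega
      obtain ⟨c, hc⟩ := Finset.card_pos.mp hpos
      simp only [Finset.mem_filter] at hc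
      exact ⟨c, Finset.mem_filter.mpr ⟨hc.1.1, hc.2⟩, hc.1.2⟩
    · intro c hc hcL0
      have hne : ¬ (c ∩ B = ∅) := by
        intro h
        exact hcL0 (Finset.mem_filter.mpr ⟨hc, h⟩)
      obtain ⟨y, hy⟩ := Finset.nonempty_iff_ne_empty.mpr hne
      rw [Finset.mem_inter] at hy
      exact ⟨y, hy.2, hy.1⟩
  -- count of L0
  have hM : 1 + k * (r - 1) + L0.card ≤ Bl.card := by
    have hsplit := Finset.card_filter_add_card_filter_not
      (s := Bl) (p := fun c => c ∩ B = ∅)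
    have hMcard : 1 + k * (r - 1) ≤ (Bl.filter (fun c => ¬ (c ∩ B = ∅))).card := by
      have hBne : ¬ (B ∩ B = ∅) := by
        rw [Finset.inter_self]
        intro h
        have := hD.block_card B hB
        rw [h] at this
        simp at this
        omega
      have hdisj2 : ∀ y₁ ∈ B, ∀ y₂ ∈ B, y₁ ≠ y₂ →
          Disjoint ((Bl.filter (fun c => y₁ ∈ c)).erase B)
            ((Bl.filter (fun c => y₂ ∈ c)).erase B) := by
        intro y₁ h₁ y₂ h₂ hne12
        rw [Finset.disjoint_left]
        intro c hc₁ hc₂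
        simp only [Finset.mem_erase, Finset.mem_filter] at hc₁ hc₂
        exact hc₁.1 (pair_unique hD (hD.block_subset B hB h₁) (hD.block_subset B hB h₂)
          hne12 hc₁.2.1 hB hc₁.2.2 hc₂.2.2 h₁ h₂)
      have hsub2 : insert B (B.biUnion (fun y => (Bl.filter (fun c => y ∈ c)).erase B)) ⊆
          Bl.filter (fun c => ¬ (c ∩ B = ∅)) := by
        intro c hc
        rw [Finset.mem_insert] at hc
        rcases hc with rfl | hc
        · exact Finset.mem_filter.mpr ⟨hB, hBne⟩
        · obtain ⟨y, hyB, hcy⟩ := Finset.mem_biUnion.mp hc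
          simp only [Finset.mem_erase, Finset.mem_filter] at hcy
          refine Finset.mem_filter.mpr ⟨hcy.2.1, ?_⟩
          intro h
          have : y ∈ c ∩ B := Finset.mem_inter.mpr ⟨hcy.2.2, hyB⟩
          rw [h] at this
          exact absurd this (Finset.notMem_empty y)
      have hBnotin : B ∉ B.biUnion (fun y => (Bl.filter (fun c => y ∈ c)).erase B) := by
        intro h
        obtain ⟨y, _, hy⟩ := Finset.mem_biUnion.mp h
        exact (Finset.mem_erase.mp hy).1 rfl
      have hcard2 : (insert B (B.biUnion (fun y => (Bl.filter (fun c => y ∈ c)).erase B))).card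
          = 1 + k * (r - 1) := by
        have heach : ∀ y ∈ B, ((Bl.filter (fun c => y ∈ c)).erase B).card = r - 1 := by
          intro y hy
          rw [Finset.card_erase_of_mem (Finset.mem_filter.mpr ⟨hB, hy⟩),
            hrx y (hD.block_subset B hB hy)]
        rw [Finset.card_insert_of_notMem hBnotin, Finset.card_biUnion hdisj2,
          Finset.sum_congr rfl heach, Finset.sum_const, smul_eq_mul, hD.block_card B hB]
        exact Nat.add_comm _ _
      rw [← hcard2]
      exact Finset.card_le_card hsub2
    have hsplit' : L0.card + (Bl.filter (fun c => ¬ (c ∩ B = ∅))).card = Bl.card := hsplit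
    linarith [hsplit', hMcard]
  -- gamma upper bound as natural number
  have hg2 : gamma X Bl ≤ k + L0.card := by
    apply Nat.sInf_le
    exact ⟨B, L0, hdom, by rw [hD.block_card B hB]⟩
  -- set of dominating set sizes nonempty
  have hSne : {n | ∃ P L, IsDomSet X Bl P L ∧ P.card + L.card = n}.Nonempty :=
    ⟨B.card + L0.card, B, L0, hdom, rfl⟩
  constructor
  · -- lower bound
    obtain ⟨P, L, hPL, hcard⟩ := Nat.sInf_mem hSne
    rw [show gamma X Bl = sInf _ from rfl, ← hcard]
    obtain ⟨hPX, hLB, hptdom, hbldom⟩ := hPL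
    have h1 : v ≤ P.card + L.card * k := by
      have hsub : X ⊆ P ∪ L.biUnion id := by
        intro x hx
        rw [Finset.mem_union]
        by_cases hxP : x ∈ P
        · exact Or.inl hxP
        · obtain ⟨b, hb, hxb⟩ := hptdom x hx hxP
          exact Or.inr (Finset.mem_biUnion.mpr ⟨b, hb, hxb⟩)
      calc v = X.card := hD.card_points.symm
        _ ≤ (P ∪ L.biUnion id).card := Finset.card_le_card hsub
        _ ≤ P.card + (L.biUnion id).card := Finset.card_union_le _ _
        _ ≤ P.card + ∑ b ∈ L, b.card := by
            exact Nat.add_le_add_left Finset.card_biUnion_le _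
        _ = P.card + L.card * k := by
            rw [Finset.sum_congr rfl (fun b hb => hD.block_card b (hLB hb)),
              Finset.sum_const, smul_eq_mul]
    have h2 : Bl.card ≤ L.card + P.card * r := by
      have hsub : Bl ⊆ L ∪ P.biUnion (fun x => Bl.filter (fun b => x ∈ b)) := by
        intro c hc
        rw [Finset.mem_union]
        by_cases hcL : c ∈ L
        · exact Or.inl hcL
        · obtain ⟨x, hxP, hxc⟩ := hbldom c hc hcL
          exact Or.inr (Finset.mem_biUnion.mpr ⟨x, hxP, Finset.mem_filter.mpr ⟨hc, hxc⟩⟩)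
      calc Bl.card ≤ (L ∪ P.biUnion (fun x => Bl.filter (fun b => x ∈ b))).card :=
            Finset.card_le_card hsub
        _ ≤ L.card + (P.biUnion (fun x => Bl.filter (fun b => x ∈ b))).card :=
            Finset.card_union_le _ _
        _ ≤ L.card + ∑ x ∈ P, (Bl.filter (fun b => x ∈ b)).card :=
            Nat.add_le_add_left Finset.card_biUnion_le _
        _ = L.card + P.card * r := by
            rw [Finset.sum_congr rfl (fun x hx => hrx x (hPX hx)),
              Finset.sum_const, smul_eq_mul]
    by_cases hp : k - 1 ≤ P.card
    · by_cases hl : k ≤ L.card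
      · omega
      · suffices h : 2 * k ≤ P.card + L.card + 1 by omega
        obtain ⟨m, rfl⟩ : ∃ m, k = m + 2 := ⟨k - 2, by omega⟩
        have h3 : L.card * (m + 1) ≤ (m + 1) * (m + 1) :=
          Nat.mul_le_mul_right _ (by omega)
        nlinarith [h1, hvk, h3]
    · have h3 : P.card * r ≤ (k - 2) * r := Nat.mul_le_mul_right _ (by omega)
      have h4 : (k - 2) * r + 2 * r = k * r := by
        have h5 : 2 ≤ k := hk2
        zify [show 2 ≤ k from hk2]
        ring
      have h5 : 2 * r ≤ L.card := by
        have hcomm : r * k = k * r := Nat.mul_comm r k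
        linarith [hbrk, h2, h3, h4, hcomm]
      omega
  · -- upper bound, rationals
    have hbQ : (Bl.card : ℚ) * k = v * r := by exact_mod_cast hbk
    have hrQ : (r : ℚ) * ((k : ℚ) - 1) = (v : ℚ) - 1 := by
      have h1 := hr
      zify [show 1 ≤ k by omega, show 1 ≤ v by omega] at h1
      exact_mod_cast h1
    have hkpos : (0 : ℚ) < (k : ℚ) * ((k : ℚ) - 1) := by
      have : (2 : ℚ) ≤ (k : ℚ) := by exact_mod_cast hk2
      nlinarith
    have key : ((v : ℚ) - (k : ℚ) ^ 2) * ((v : ℚ) - 1) / ((k : ℚ) * ((k : ℚ) - 1))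
        = (Bl.card : ℚ) - (k : ℚ) * (r : ℚ) := by
      rw [div_eq_iff (ne_of_gt hkpos)]
      linear_combination (-(k : ℚ) + 1) * hbQ + (-(v : ℚ) + (k : ℚ) ^ 2) * hrQ
    have hMQ : (k : ℚ) * (r : ℚ) + (L0.card : ℚ) + 1 ≤ (Bl.card : ℚ) + (k : ℚ) := by
      have e : k * (r - 1) + k = k * r := by
        zify [show 1 ≤ r by omega]
        ring
      have hM' : k * r + L0.card + 1 ≤ Bl.card + k := by
        linarith [hM, e]
      exact_mod_cast hM'
    have hgQ : (gamma X Bl : ℚ) ≤ (k : ℚ) + (L0.card : ℚ) := by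
      exact_mod_cast hg2
    rw [key]
    linarith [hgQ, hMQ]
end

section
/- Let D = (X, 𝓑) be a 2-(v,k,λ) design, let S be a dominating set of the incidence graph G_D, and let P = S ∩ X. Then |S| ≥ ⌈(v + |P|(k−1)) / k⌉. -/
open Finset

variable {α : Type*} [DecidableEq α]

theorem stmt_5 (X : Finset α) (Bl : Finset (Finset α)) (v k lam : ℕ)
    (hD : IsDesign X Bl v k lam) (P : Finset α) (L : Finset (Finset α))
    (hS : IsDomSet X Bl P L) :
    ⌈((v : ℚ) + (P.card : ℚ) * ((k : ℚ) - 1)) / (k : ℚ)⌉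
      ≤ ((P.card + L.card : ℕ) : ℤ) := by
  obtain ⟨hPX, hLB, hdomP, hdomL⟩ := hS
  have hcov : X ⊆ P ∪ L.biUnion id := by
    intro x hx
    by_cases hxP : x ∈ P
    · exact mem_union_left _ hxP
    · obtain ⟨b, hb, hxb⟩ := hdomP x hx hxP
      exact mem_union_right _ (mem_biUnion.2 ⟨b, hb, hxb⟩)
  have hkey : v ≤ P.card + k * L.card := by
    calc v = X.card := hD.card_points.symm
      _ ≤ (P ∪ L.biUnion id).card := card_le_card hcov
      _ ≤ P.card + (L.biUnion id).card := card_union_le _ _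
      _ ≤ P.card + ∑ b ∈ L, b.card := by
          exact Nat.add_le_add_left (card_biUnion_le) _
      _ ≤ P.card + k * L.card := by
          apply Nat.add_le_add_left
          rw [Nat.mul_comm]
          apply le_of_eq
          rw [← Finset.sum_const_nat (m := k)]
          intro b hb
          exact hD.block_card b (hLB hb)
  have hk : (0:ℚ) < (k:ℚ) := by exact_mod_cast lt_of_lt_of_le Nat.zero_lt_two hD.two_le_k
  rw [Int.ceil_le]
  push_cast
  rw [div_le_iff₀ hk]
  have hv : (v:ℚ) ≤ (P.card:ℚ) + (k:ℚ) * (L.card:ℚ) := by exact_mod_cast hkey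
  nlinarith [hv, hk]
end

section
/- Let G be a finite simple graph without isolated vertices. Then G has a minimum dominating set S (i.e., a dominating set of cardinality γ(G)) in which every vertex of S has an external private neighbour: for each u ∈ S there exists a vertex w ∉ S such that u is the only neighbour of w in S. -/
/-!
Among the minimum dominating sets choose one, `S`, with as few vertices as possible that have no
neighbour in `S`. Suppose `u ∈ S` had no external private neighbour, so every vertex outside `S`
is still dominated by `S \ {u}`. If `u` has a neighbour in `S`, then `S \ {u}` is a smaller
dominating set. Otherwise, swapping `u` for any neighbour `w` of `u` (necessarily outside `S`)
keeps the set dominating and of the same size, and lowers the number of vertices without a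
neighbour in the set: `u` leaves, and `w` does not join since, not being private to `u`, it is
adjacent to some other vertex of `S`.
-/

namespace SimpleGraph

variable {V : Type*} (G : SimpleGraph V)

def IsDominating (S : Finset V) : Prop :=
  ∀ v, v ∉ S → ∃ u ∈ S, G.Adj v u

def IsPrivateNeighbor (S : Finset V) (u w : V) : Prop :=
  w ∉ S ∧ G.Adj w u ∧ ∀ u' ∈ S, G.Adj w u' → u' = u

def isolatedIn [DecidableRel G.Adj] (S : Finset V) : Finset V :=
  S.filter fun x => ∀ y ∈ S, ¬ G.Adj x y

def dominationRank [DecidableRel G.Adj] (S : Finset V) : ℕ ×ₗ ℕ :=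
  toLex (S.card, (G.isolatedIn S).card)

theorem exists_isDominating_forall_dominationRank_le [Fintype V] [DecidableRel G.Adj] :
    ∃ S, G.IsDominating S ∧
      ∀ T, G.IsDominating T → G.dominationRank S ≤ G.dominationRank T := by
  classical
  have huniv : G.IsDominating Finset.univ := fun v hv => absurd (Finset.mem_univ v) hv
  obtain ⟨S, hS, hmin⟩ := (Finset.univ.filter G.IsDominating).exists_min_image G.dominationRank
    ⟨Finset.univ, Finset.mem_filter.mpr ⟨Finset.mem_univ _, huniv⟩⟩
  exact ⟨S, (Finset.mem_filter.mp hS).2,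
    fun T hT => hmin T (Finset.mem_filter.mpr ⟨Finset.mem_univ _, hT⟩)⟩

variable {G} {S : Finset V} {u w : V}

theorem exists_adj_ne_of_not_isPrivateNeighbor (h : ¬ G.IsPrivateNeighbor S u w) (hw : w ∉ S)
    (hwu : G.Adj w u) : ∃ u' ∈ S, G.Adj w u' ∧ u' ≠ u := by
  simpa [IsPrivateNeighbor, hw, hwu] using h

variable [DecidableEq V]

theorem IsDominating.exists_adj_mem_erase (hS : G.IsDominating S)
    (hu : ∀ w, ¬ G.IsPrivateNeighbor S u w) {v : V} (hv : v ∉ S) :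
    ∃ x ∈ S.erase u, G.Adj v x := by
  obtain ⟨x, hxS, hvx⟩ := hS v hv
  by_cases hxu : x = u
  · subst hxu
    obtain ⟨x', hx'S, hvx', hx'x⟩ := exists_adj_ne_of_not_isPrivateNeighbor (hu v) hv hvx
    exact ⟨x', Finset.mem_erase.mpr ⟨hx'x, hx'S⟩, hvx'⟩
  · exact ⟨x, Finset.mem_erase.mpr ⟨hxu, hxS⟩, hvx⟩

theorem IsDominating.erase (hS : G.IsDominating S) (hu : ∀ w, ¬ G.IsPrivateNeighbor S u w)
    {y : V} (hyS : y ∈ S) (huy : G.Adj u y) : G.IsDominating (S.erase u) := by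
  intro v hv
  by_cases hvu : v = u
  · subst hvu
    exact ⟨y, Finset.mem_erase.mpr ⟨huy.ne.symm, hyS⟩, huy⟩
  · exact hS.exists_adj_mem_erase hu fun hvS => hv (Finset.mem_erase.mpr ⟨hvu, hvS⟩)

theorem IsDominating.insert_erase (hS : G.IsDominating S)
    (hu : ∀ w, ¬ G.IsPrivateNeighbor S u w) (huw : G.Adj u w) :
    G.IsDominating (insert w (S.erase u)) := by
  intro v hv
  by_cases hvu : v = u
  · subst hvu
    exact ⟨w, Finset.mem_insert_self _ _, huw⟩
  · have hvS : v ∉ S := fun hvS =>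
      hv (Finset.mem_insert_of_mem (Finset.mem_erase.mpr ⟨hvu, hvS⟩))
    obtain ⟨x, hx, hvx⟩ := hS.exists_adj_mem_erase hu hvS
    exact ⟨x, Finset.mem_insert_of_mem hx, hvx⟩

theorem isolatedIn_insert_erase_ssubset [DecidableRel G.Adj] (hu : u ∈ G.isolatedIn S)
    {z : V} (hz : z ∈ S.erase u) (hwz : G.Adj w z) :
    G.isolatedIn (insert w (S.erase u)) ⊂ G.isolatedIn S := by
  refine Finset.ssubset_of_subset_of_ssubset ?_ (Finset.erase_ssubset hu)
  intro x hx
  obtain ⟨hxT, hx_iso⟩ := Finset.mem_filter.mp hx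
  have hxw : x ≠ w := by
    rintro rfl
    exact hx_iso z (Finset.mem_insert_of_mem hz) hwz
  obtain ⟨hxu, hxS⟩ := Finset.mem_erase.mp ((Finset.mem_insert.mp hxT).resolve_left hxw)
  refine Finset.mem_erase.mpr ⟨hxu, Finset.mem_filter.mpr ⟨hxS, fun y hyS hxy => ?_⟩⟩
  by_cases hyu : y = u
  · subst hyu
    exact (Finset.mem_filter.mp hu).2 x hxS hxy.symm
  · exact hx_iso y (Finset.mem_insert_of_mem (Finset.mem_erase.mpr ⟨hyu, hyS⟩)) hxy

variable [DecidableRel G.Adj]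

theorem exists_isPrivateNeighbor_of_dominationRank_le (hiso : ∀ v, ∃ w, G.Adj v w)
    (hS : G.IsDominating S)
    (hmin : ∀ T, G.IsDominating T → G.dominationRank S ≤ G.dominationRank T) (hu : u ∈ S) :
    ∃ w, G.IsPrivateNeighbor S u w := by
  by_contra! hpriv
  by_cases hadj : ∃ y ∈ S, G.Adj u y
  · obtain ⟨y, hyS, huy⟩ := hadj
    exact (Prod.Lex.monotone_fst _ _ (hmin _ (hS.erase hpriv hyS huy))).not_gt
      (Finset.card_erase_lt_of_mem hu)
  · push Not at hadj
    obtain ⟨w, huw⟩ := hiso u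
    have hwS : w ∉ S := fun hwS => hadj w hwS huw
    obtain ⟨z, hzS, hwz, hzu⟩ := exists_adj_ne_of_not_isPrivateNeighbor (hpriv w) hwS huw.symm
    have hu_iso : u ∈ G.isolatedIn S := Finset.mem_filter.mpr ⟨hu, hadj⟩
    have hlt := Finset.card_lt_card
      (isolatedIn_insert_erase_ssubset hu_iso (Finset.mem_erase.mpr ⟨hzu, hzS⟩) hwz)
    have hcard : (insert w (S.erase u)).card = S.card := by
      rw [Finset.card_insert_of_notMem fun h => hwS (Finset.mem_of_mem_erase h),
        Finset.card_erase_add_one hu]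
    have hle := Prod.Lex.toLex_le_toLex'.mp (hmin _ (hS.insert_erase hpriv huw))
    exact (hle.2 hcard.symm).not_gt hlt

end SimpleGraph

open SimpleGraph in
theorem stmt_7_general {V : Type*} [Fintype V] (G : SimpleGraph V)
    (hiso : ∀ v : V, ∃ w : V, G.Adj v w) :
    ∃ S : Finset V,
      (∀ v : V, v ∉ S → ∃ u ∈ S, G.Adj v u) ∧
      (∀ T : Finset V, (∀ v : V, v ∉ T → ∃ u ∈ T, G.Adj v u) → S.card ≤ T.card) ∧
      (∀ u ∈ S, ∃ w : V, w ∉ S ∧ G.Adj w u ∧ ∀ u' ∈ S, G.Adj w u' → u' = u) := by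
  classical
  obtain ⟨S, hS, hmin⟩ := G.exists_isDominating_forall_dominationRank_le
  exact ⟨S, hS, fun T hT => Prod.Lex.monotone_fst _ _ (hmin T hT),
    fun u hu => exists_isPrivateNeighbor_of_dominationRank_le hiso hS hmin hu⟩

theorem stmt_7 {V : Type*} [Fintype V] [DecidableEq V] (G : SimpleGraph V)
    (hiso : ∀ v : V, ∃ w : V, G.Adj v w) :
    ∃ S : Finset V,
      (∀ v : V, v ∉ S → ∃ u ∈ S, G.Adj v u) ∧
      (∀ T : Finset V, (∀ v : V, v ∉ T → ∃ u ∈ T, G.Adj v u) → S.card ≤ T.card) ∧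
      (∀ u ∈ S, ∃ w : V, w ∉ S ∧ G.Adj w u ∧ ∀ u' ∈ S, G.Adj w u' → u' = u) :=
  stmt_7_general G hiso
end

section
/- Let D = (X, 𝓑) be a 2-(v,k,λ) design in which every point lies in exactly r = λ(v−1)/(k−1) blocks, and let P ⊆ X be a set of points with |P| ≤ ⌈r/λ⌉ − 1. Then I_P = P ∪ L̂(P) is a dominating set of the incidence graph G_D. -/
open Finset

variable {α : Type*} [DecidableEq α]

theorem stmt_8 (X : Finset α) (Bl : Finset (Finset α)) (v k lam r : ℕ)
    (hD : IsDesign X Bl v k lam)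
    (hr : ∀ x ∈ X, (Bl.filter (fun b => x ∈ b)).card = r)
    (hrval : r * (k - 1) = lam * (v - 1))
    (P : Finset α) (hP : P ⊆ X)
    (hcard : (P.card : ℤ) ≤ ⌈(r : ℚ) / (lam : ℚ)⌉ - 1) :
    IsDomSet X Bl P (Bl.filter (fun b => b ∩ P = ∅)) := by
  have hlam : 0 < lam := hD.one_le_lam
  -- lam * P.card < r
  have hlt : lam * P.card < r := by
    have h1 : (P.card : ℚ) < (r : ℚ) / (lam : ℚ) := by
      have h2 : ((P.card : ℤ) : ℚ) ≤ (⌈(r : ℚ) / (lam : ℚ)⌉ : ℚ) - 1 := by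
        exact_mod_cast hcard
      have h3 : ((⌈(r : ℚ) / (lam : ℚ)⌉ : ℚ)) - 1 < (r : ℚ) / (lam : ℚ) := by
        have := Int.ceil_lt_add_one ((r : ℚ) / (lam : ℚ))
        linarith
      calc ((P.card : ℚ)) = ((P.card : ℤ) : ℚ) := by push_cast; ring
        _ ≤ _ := h2
        _ < _ := h3
    have hlamQ : (0 : ℚ) < (lam : ℚ) := by exact_mod_cast hlam
    have : (lam : ℚ) * (P.card : ℚ) < (r : ℚ) := by
      rw [div_eq_mul_inv] at h1
      have := (mul_lt_mul_iff_right₀ hlamQ).mpr h1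
      calc (lam : ℚ) * (P.card : ℚ) < (lam : ℚ) * ((r : ℚ) * (lam : ℚ)⁻¹) := this
        _ = (r : ℚ) := by field_simp
    exact_mod_cast this
  refine ⟨hP, filter_subset _ _, ?_, ?_⟩
  · intro x hx hxP
    by_contra hcon
    push_neg at hcon
    -- every block through x meets P
    have hsub : Bl.filter (fun b => x ∈ b) ⊆
        P.biUnion (fun p => Bl.filter (fun b => x ∈ b ∧ p ∈ b)) := by
      intro b hb
      simp only [mem_filter] at hb
      have hbne : b ∩ P ≠ ∅ := by
        intro he
        exact (hcon b (mem_filter.mpr ⟨hb.1, he⟩)) hb.2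
      obtain ⟨p, hp⟩ := nonempty_iff_ne_empty.mpr hbne
      rw [mem_inter] at hp
      exact mem_biUnion.mpr ⟨p, hp.2, mem_filter.mpr ⟨hb.1, hb.2, hp.1⟩⟩
    have hle : r ≤ lam * P.card := by
      have h1 := card_le_card hsub
      rw [hr x hx] at h1
      have h2 := card_biUnion_le (s := P)
        (t := fun p => Bl.filter (fun b => x ∈ b ∧ p ∈ b))
      have h3 : ∑ p ∈ P, (Bl.filter (fun b => x ∈ b ∧ p ∈ b)).card
          = ∑ p ∈ P, lam := by
        refine Finset.sum_congr rfl fun p hp => ?_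
        exact hD.pair_count x hx p (hP hp) (fun h => hxP (h ▸ hp))
      rw [h3, Finset.sum_const, smul_eq_mul, mul_comm] at h2
      exact le_trans h1 h2
    omega
  · intro b hb hbL
    have hbne : b ∩ P ≠ ∅ := fun he => hbL (mem_filter.mpr ⟨hb, he⟩)
    obtain ⟨p, hp⟩ := nonempty_iff_ne_empty.mpr hbne
    rw [mem_inter] at hp
    exact ⟨p, hp.2, hp.1⟩
end

section
/- Let D = (X, 𝓑) be a 2-(v,k,λ) design in which every point lies in exactly r = λ(v−1)/(k−1) blocks, and suppose γ(D) < (⌈r/λ⌉(k−1) + v)/k. Then D is super-neat: every minimum dominating set S of the incidence graph G_D satisfies S = I_P where P = S ∩ X. -/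
open Finset

variable {α : Type*} [DecidableEq α]

theorem stmt_12 (X : Finset α) (Bl : Finset (Finset α)) (v k lam r : ℕ)
    (hD : IsDesign X Bl v k lam)
    (hr : ∀ x ∈ X, (Bl.filter (fun b => x ∈ b)).card = r)
    (hrval : r * (k - 1) = lam * (v - 1))
    (hγ : (gamma X Bl : ℚ)
      < ((⌈(r : ℚ) / (lam : ℚ)⌉ : ℚ) * ((k : ℚ) - 1) + (v : ℚ)) / (k : ℚ)) :
    ∀ P L, IsDomSet X Bl P L → P.card + L.card = gamma X Bl →
      L = Bl.filter (fun b => b ∩ P = ∅) := by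
  intro P L hdom hmin
  obtain ⟨hPX, hLB, hptdom, hblkdom⟩ := hdom
  have hk2 := hD.two_le_k
  have hlam1 := hD.one_le_lam
  have hgle : ∀ P' L', IsDomSet X Bl P' L' → gamma X Bl ≤ P'.card + L'.card :=
    fun P' L' h => Nat.sInf_le ⟨P', L', h, rfl⟩
  -- v ≤ |P| + k|L|
  have hXsub : X ⊆ P ∪ L.biUnion id := by
    intro x hx
    by_cases hxP : x ∈ P
    · exact mem_union_left _ hxP
    · obtain ⟨b, hbL, hxb⟩ := hptdom x hx hxP
      exact mem_union_right _ (mem_biUnion.mpr ⟨b, hbL, hxb⟩)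
  have hv : v ≤ P.card + k * L.card := by
    have h1 : X.card ≤ P.card + (L.biUnion id).card :=
      le_trans (card_le_card hXsub) (card_union_le _ _)
    have h2 : (L.biUnion id).card ≤ k * L.card := by
      calc (L.biUnion id).card ≤ ∑ b ∈ L, (id b).card := card_biUnion_le
        _ = ∑ _b ∈ L, k := sum_congr rfl (fun b hb => hD.block_card b (hLB hb))
        _ = k * L.card := by rw [sum_const, smul_eq_mul, mul_comm]
    rw [hD.card_points] at h1
    omega
  -- |P| * lam < r
  have hplam : P.card * lam < r := by
    have hkQ : (2:ℚ) ≤ (k:ℚ) := by exact_mod_cast hk2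
    have hlamQ : (0:ℚ) < (lam:ℚ) := by exact_mod_cast hlam1
    set c : ℤ := ⌈(r:ℚ)/(lam:ℚ)⌉ with hc
    have hγ' : (gamma X Bl : ℚ) * k < (c:ℚ) * ((k:ℚ)-1) + v :=
      (lt_div_iff₀ (by linarith)).mp hγ
    have hvQ : (v:ℚ) ≤ (P.card:ℚ) + (k:ℚ) * (L.card:ℚ) := by exact_mod_cast hv
    have hγv : (gamma X Bl : ℚ) = (P.card:ℚ) + (L.card:ℚ) := by exact_mod_cast hmin.symm
    have hpc : (P.card : ℚ) < (c:ℚ) := by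
      have h1 : (P.card:ℚ) * ((k:ℚ)-1) < (c:ℚ) * ((k:ℚ)-1) := by nlinarith
      exact lt_of_mul_lt_mul_right h1 (by linarith)
    have hpcZ : (P.card : ℤ) ≤ c - 1 := by
      have : (P.card : ℤ) < c := by exact_mod_cast hpc
      omega
    have hceil : (c:ℚ) < (r:ℚ)/(lam:ℚ) + 1 := Int.ceil_lt_add_one _
    have hlt : (P.card:ℚ) < (r:ℚ)/(lam:ℚ) := by
      have h2 : (P.card:ℚ) ≤ (c:ℚ) - 1 := by exact_mod_cast hpcZ
      linarith
    have : (P.card:ℚ) * (lam:ℚ) < (r:ℚ) := (lt_div_iff₀ hlamQ).mp hlt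
    exact_mod_cast this
  -- every point outside P is on a block of L disjoint from P
  have hcover : ∀ x ∈ X, x ∉ P → ∃ b ∈ L, x ∈ b ∧ b ∩ P = ∅ := by
    intro x hx hxP
    have hsub : (Bl.filter (fun b => x ∈ b)).filter (fun b => ¬ b ∩ P = ∅)
        ⊆ P.biUnion (fun y => Bl.filter (fun b => x ∈ b ∧ y ∈ b)) := by
      intro b hb
      simp only [mem_filter] at hb
      obtain ⟨⟨hbB, hxb⟩, hne⟩ := hb
      obtain ⟨y, hy⟩ := nonempty_iff_ne_empty.mpr hne
      rw [mem_inter] at hy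
      exact mem_biUnion.mpr ⟨y, hy.2, mem_filter.mpr ⟨hbB, hxb, hy.1⟩⟩
    have hcard : ((Bl.filter (fun b => x ∈ b)).filter (fun b => ¬ b ∩ P = ∅)).card
        ≤ P.card * lam := by
      calc _ ≤ ∑ y ∈ P, (Bl.filter (fun b => x ∈ b ∧ y ∈ b)).card :=
            le_trans (card_le_card hsub) card_biUnion_le
        _ = ∑ _y ∈ P, lam := sum_congr rfl (fun y hy =>
            hD.pair_count x hx y (hPX hy) (fun h => hxP (h ▸ hy)))
        _ = P.card * lam := by rw [sum_const, smul_eq_mul]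
    have hsplit := Finset.card_filter_add_card_filter_not
      (s := Bl.filter (fun b => x ∈ b)) (p := fun b => b ∩ P = ∅)
    rw [hr x hx] at hsplit
    have hpos : 0 < ((Bl.filter (fun b => x ∈ b)).filter (fun b => b ∩ P = ∅)).card := by
      omega
    obtain ⟨b, hb⟩ := card_pos.mp hpos
    simp only [mem_filter] at hb
    obtain ⟨⟨hbB, hxb⟩, hdisj⟩ := hb
    have hbL : b ∈ L := by
      by_contra hbL
      obtain ⟨y, hyP, hyb⟩ := hblkdom b hbB hbL
      exact (eq_empty_iff_forall_notMem.mp hdisj y) (mem_inter.mpr ⟨hyb, hyP⟩)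
    exact ⟨b, hbL, hxb, hdisj⟩
  -- conclusion
  ext b
  simp only [mem_filter]
  constructor
  · intro hbL
    refine ⟨hLB hbL, ?_⟩
    by_contra hne
    set L' := L.filter (fun b => b ∩ P = ∅) with hL'
    have hdom' : IsDomSet X Bl P L' := by
      refine ⟨hPX, le_trans (filter_subset _ _) hLB, ?_, ?_⟩
      · intro x hx hxP
        obtain ⟨b', hb'L, hxb', hdisj'⟩ := hcover x hx hxP
        exact ⟨b', mem_filter.mpr ⟨hb'L, hdisj'⟩, hxb'⟩
      · intro b' hb'B hb'L'
        by_cases hb'L : b' ∈ L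
        · have hne' : ¬ b' ∩ P = ∅ := fun h => hb'L' (mem_filter.mpr ⟨hb'L, h⟩)
          obtain ⟨y, hy⟩ := nonempty_iff_ne_empty.mpr hne'
          rw [mem_inter] at hy
          exact ⟨y, hy.2, hy.1⟩
        · exact hblkdom b' hb'B hb'L
    have hss : L' ⊂ L :=
      (ssubset_iff_of_subset (filter_subset _ _)).mpr
        ⟨b, hbL, fun h => hne (mem_filter.mp h).2⟩
    have hlt : L'.card < L.card := card_lt_card hss
    have := hgle P L' hdom'
    omega
  · rintro ⟨hbB, hbdisj⟩
    by_contra hbL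
    obtain ⟨y, hyP, hyb⟩ := hblkdom b hbB hbL
    exact (eq_empty_iff_forall_notMem.mp hbdisj y) (mem_inter.mpr ⟨hyb, hyP⟩)
end

section
/- Let D be a finite affine plane of order q ≥ 2, i.e., a 2-(q², q, 1) design. Then γ(D) = 2q − 1. -/
open Finset

variable {α : Type*} [DecidableEq α]

lemma double_count {β γ : Type*} (s : Finset β) (t : Finset γ) (R : β → γ → Prop)
    [∀ a b, Decidable (R a b)] :
    ∑ a ∈ s, (t.filter (fun b => R a b)).card = ∑ b ∈ t, (s.filter (fun a => R a b)).card := by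
  simp only [Finset.card_filter]
  exact Finset.sum_comm

lemma line_unique {X : Finset α} {Bl : Finset (Finset α)} {q : ℕ}
    (hD : IsDesign X Bl (q^2) q 1) {b c : Finset α} (hb : b ∈ Bl) (hc : c ∈ Bl)
    {x y : α} (hxy : x ≠ y) (hxb : x ∈ b) (hyb : y ∈ b) (hxc : x ∈ c) (hyc : y ∈ c) :
    b = c := by
  have hx := hD.block_subset b hb hxb
  have hy := hD.block_subset b hb hyb
  have h := hD.pair_count x hx y hy hxy
  exact Finset.card_le_one.mp h.le b (mem_filter.2 ⟨hb, hxb, hyb⟩) c (mem_filter.2 ⟨hc, hxc, hyc⟩)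

lemma point_deg {X : Finset α} {Bl : Finset (Finset α)} {q : ℕ} (hq : 2 ≤ q)
    (hD : IsDesign X Bl (q^2) q 1) {x : α} (hx : x ∈ X) :
    (Bl.filter (fun b => x ∈ b)).card = q + 1 := by
  have key := double_count (X.erase x) Bl (fun y b => x ∈ b ∧ y ∈ b)
  have hL : ∑ y ∈ X.erase x, (Bl.filter (fun b => x ∈ b ∧ y ∈ b)).card = q^2 - 1 := by
    rw [Finset.sum_congr rfl (fun y hy => hD.pair_count x hx y (mem_of_mem_erase hy)
      (Finset.ne_of_mem_erase hy).symm)]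
    simp [Finset.card_erase_of_mem hx, hD.card_points]
  have hR : ∑ b ∈ Bl, ((X.erase x).filter (fun y => x ∈ b ∧ y ∈ b)).card
      = (Bl.filter (fun b => x ∈ b)).card * (q - 1) := by
    rw [← Finset.sum_filter_add_sum_filter_not Bl (fun b => x ∈ b)]
    have h1 : ∀ b ∈ Bl.filter (fun b => x ∈ b),
        ((X.erase x).filter (fun y => x ∈ b ∧ y ∈ b)).card = q - 1 := by
      intro b hb
      obtain ⟨hbB, hxb⟩ := mem_filter.1 hb
      have he : (X.erase x).filter (fun y => x ∈ b ∧ y ∈ b) = b.erase x := by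
        ext y
        simp only [mem_filter, mem_erase]
        constructor
        · rintro ⟨⟨hyx, _⟩, _, hyb⟩; exact ⟨hyx, hyb⟩
        · rintro ⟨hyx, hyb⟩; exact ⟨⟨hyx, hD.block_subset b hbB hyb⟩, hxb, hyb⟩
      rw [he, Finset.card_erase_of_mem hxb, hD.block_card b hbB]
    have h2 : ∀ b ∈ Bl.filter (fun b => ¬ x ∈ b),
        ((X.erase x).filter (fun y => x ∈ b ∧ y ∈ b)).card = 0 := by
      intro b hb
      obtain ⟨hbB, hxb⟩ := mem_filter.1 hb
      rw [Finset.card_eq_zero]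
      ext y; simp only [mem_filter, notMem_empty, iff_false]
      rintro ⟨_, hxb', _⟩; exact hxb hxb'
    rw [Finset.sum_congr rfl h1, Finset.sum_congr rfl h2, Finset.sum_const, Finset.sum_const]
    simp [mul_comm]
  rw [hL, hR] at key
  have hmul : (q + 1) * (q - 1) + 1 = q ^ 2 := by
    obtain ⟨m, rfl⟩ := Nat.exists_eq_add_of_le hq
    have h1 : 2 + m - 1 = m + 1 := by omega
    rw [h1, pow_two]; ring
  have : q ^ 2 - 1 = (q + 1) * (q - 1) := by omega
  rw [this] at key
  exact Nat.eq_of_mul_eq_mul_right (by omega) key.symm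

lemma block_count {X : Finset α} {Bl : Finset (Finset α)} {q : ℕ} (hq : 2 ≤ q)
    (hD : IsDesign X Bl (q^2) q 1) : Bl.card = q^2 + q := by
  have key := double_count X Bl (fun x b => x ∈ b)
  have hL : ∑ x ∈ X, (Bl.filter (fun b => x ∈ b)).card = q^2 * (q+1) := by
    rw [Finset.sum_congr rfl (fun x hx => point_deg hq hD hx), Finset.sum_const,
      hD.card_points, smul_eq_mul]
  have hR : ∑ b ∈ Bl, (X.filter (fun a => a ∈ b)).card = Bl.card * q := by
    have h1 : ∀ b ∈ Bl, (X.filter (fun a => a ∈ b)).card = q := by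
      intro b hb
      have he : X.filter (fun a => a ∈ b) = b := by
        rw [Finset.filter_mem_eq_inter, Finset.inter_eq_right.2 (hD.block_subset b hb)]
      rw [he, hD.block_card b hb]
    rw [Finset.sum_congr rfl h1, Finset.sum_const, smul_eq_mul]
  rw [hL, hR] at key
  have : Bl.card * q = (q^2 + q) * q := by rw [← key]; ring
  exact Nat.eq_of_mul_eq_mul_right (by omega) this

lemma lower_bound {X : Finset α} {Bl : Finset (Finset α)} {q : ℕ} (hq : 2 ≤ q)
    (hD : IsDesign X Bl (q^2) q 1) {P : Finset α} {L : Finset (Finset α)}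
    (h : IsDomSet X Bl P L) : 2 * q - 1 ≤ P.card + L.card := by
  classical
  obtain ⟨hPX, hLB, hdom1, hdom2⟩ := h
  have h1 : q^2 ≤ P.card + L.card * q := by
    have hsub : X ⊆ P ∪ L.biUnion id := by
      intro x hx
      by_cases hxP : x ∈ P
      · exact mem_union_left _ hxP
      · obtain ⟨b, hb, hxb⟩ := hdom1 x hx hxP
        exact mem_union_right _ (mem_biUnion.2 ⟨b, hb, hxb⟩)
    calc q^2 = X.card := hD.card_points.symm
      _ ≤ (P ∪ L.biUnion id).card := card_le_card hsub
      _ ≤ P.card + (L.biUnion id).card := card_union_le _ _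
      _ ≤ P.card + ∑ b ∈ L, (id b).card := by
          exact Nat.add_le_add_left (card_biUnion_le) _
      _ = P.card + L.card * q := by
          simp only [id_eq]
          rw [Finset.sum_congr rfl (fun b hb => hD.block_card b (hLB hb)),
            Finset.sum_const, smul_eq_mul]
  have h2 : q^2 + q ≤ L.card + P.card * (q + 1) := by
    have hsub : Bl ⊆ L ∪ P.biUnion (fun x => Bl.filter (fun b => x ∈ b)) := by
      intro b hb
      by_cases hbL : b ∈ L
      · exact mem_union_left _ hbL
      · obtain ⟨x, hxP, hxb⟩ := hdom2 b hb hbL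
        exact mem_union_right _ (mem_biUnion.2 ⟨x, hxP, mem_filter.2 ⟨hb, hxb⟩⟩)
    calc q^2 + q = Bl.card := (block_count hq hD).symm
      _ ≤ (L ∪ P.biUnion (fun x => Bl.filter (fun b => x ∈ b))).card := card_le_card hsub
      _ ≤ L.card + (P.biUnion (fun x => Bl.filter (fun b => x ∈ b))).card := card_union_le _ _
      _ ≤ L.card + ∑ x ∈ P, (Bl.filter (fun b => x ∈ b)).card := by
          exact Nat.add_le_add_left (card_biUnion_le) _
      _ = L.card + P.card * (q + 1) := by
          rw [Finset.sum_congr rfl (fun x hx => point_deg hq hD (hPX hx)),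
            Finset.sum_const, smul_eq_mul]
  by_contra hcon
  push_neg at hcon
  have hc : P.card + L.card + 2 ≤ 2 * q := by omega
  set p := P.card
  set l := L.card
  have H1 : (q:ℤ)^2 ≤ (p:ℤ) + (l:ℤ) * q := by exact_mod_cast h1
  have H2 : (q:ℤ)^2 + q ≤ (l:ℤ) + (p:ℤ) * (q + 1) := by exact_mod_cast h2
  have HC : (p:ℤ) + l + 2 ≤ 2 * q := by exact_mod_cast hc
  have HQ : (2:ℤ) ≤ q := by exact_mod_cast hq
  have hCq : (0:ℤ) ≤ (2*q - p - l - 2) * q := by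
    apply mul_nonneg <;> linarith
  have hG : (0:ℤ) ≤ (p:ℤ) - q - 2 := by nlinarith [hCq, H1, H2, HC]
  nlinarith [mul_nonneg hG (show (0:ℤ) ≤ (q:ℤ) - 1 by linarith), hCq, H1]
lemma parallel_unique {X : Finset α} {Bl : Finset (Finset α)} {q : ℕ} (hq : 2 ≤ q)
    (hD : IsDesign X Bl (q^2) q 1) {ℓ : Finset α} (hℓ : ℓ ∈ Bl) {x : α}
    (hx : x ∈ X) (hxℓ : x ∉ ℓ) :
    ((Bl.filter (fun b => x ∈ b)).filter (fun b => ¬ ∃ y ∈ b, y ∈ ℓ)).card = 1 := by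
  classical
  set S := Bl.filter (fun b => x ∈ b) with hS
  set M := S.filter (fun b => ∃ y ∈ b, y ∈ ℓ) with hM
  have hScard : S.card = q + 1 := point_deg hq hD hx
  have hℓcard : ℓ.card = q := hD.block_card ℓ hℓ
  have hMle : M.card ≤ ℓ.card := by
    apply Finset.card_le_card_of_injOn (fun b => if h : ∃ y ∈ b, y ∈ ℓ then h.choose else x)
    · intro b hb
      obtain ⟨hbS, h⟩ := mem_filter.1 hb
      simp only [dif_pos h]
      exact h.choose_spec.2
    · intro b hb c hc hfe
      obtain ⟨hbS, h⟩ := mem_filter.1 (Finset.mem_coe.1 hb)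
      obtain ⟨hcS, h'⟩ := mem_filter.1 (Finset.mem_coe.1 hc)
      obtain ⟨hbB, hxb⟩ := mem_filter.1 hbS
      obtain ⟨hcB, hxc⟩ := mem_filter.1 hcS
      simp only [dif_pos h, dif_pos h'] at hfe
      have hz := h.choose_spec
      have hz' := h'.choose_spec
      have hne : x ≠ h.choose := fun e => hxℓ (e ▸ hz.2)
      exact line_unique hD hbB hcB hne hxb hz.1 hxc (hfe ▸ hz'.1)
  have hqM : ℓ.card ≤ M.card := by
    apply Finset.card_le_card_of_injOn
      (fun y => if h : (Bl.filter (fun b => x ∈ b ∧ y ∈ b)).Nonempty then h.choose else ∅)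
    · intro y hy
      have hyX := hD.block_subset ℓ hℓ hy
      have hxy : x ≠ y := fun e => hxℓ (e ▸ hy)
      have hne : (Bl.filter (fun b => x ∈ b ∧ y ∈ b)).Nonempty := by
        rw [← Finset.card_pos, hD.pair_count x hx y hyX hxy]; omega
      simp only [dif_pos hne]
      obtain ⟨hbB, hxb, hyb⟩ := mem_filter.1 hne.choose_spec
      exact mem_filter.2 ⟨mem_filter.2 ⟨hbB, hxb⟩, ⟨y, hyb, hy⟩⟩
    · intro y hy y' hy' hfe
      have hy := Finset.mem_coe.1 hy
      have hy' := Finset.mem_coe.1 hy'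
      have hyX := hD.block_subset ℓ hℓ hy
      have hyX' := hD.block_subset ℓ hℓ hy'
      have hxy : x ≠ y := fun e => hxℓ (e ▸ hy)
      have hxy' : x ≠ y' := fun e => hxℓ (e ▸ hy')
      have hne : (Bl.filter (fun b => x ∈ b ∧ y ∈ b)).Nonempty := by
        rw [← Finset.card_pos, hD.pair_count x hx y hyX hxy]; omega
      have hne' : (Bl.filter (fun b => x ∈ b ∧ y' ∈ b)).Nonempty := by
        rw [← Finset.card_pos, hD.pair_count x hx y' hyX' hxy']; omega
      simp only [dif_pos hne, dif_pos hne'] at hfe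
      obtain ⟨hbB, hxb, hyb⟩ := mem_filter.1 hne.choose_spec
      obtain ⟨hbB', hxb', hyb'⟩ := mem_filter.1 hne'.choose_spec
      by_contra hyy
      have hyb'' : y' ∈ hne.choose := by rw [hfe]; exact hyb'
      have hbℓ : hne.choose = ℓ :=
        line_unique hD hbB hℓ hyy hyb hyb'' hy hy'
      exact hxℓ (hbℓ ▸ hxb)
  have hMq : M.card = q := le_antisymm (hℓcard ▸ hMle) (hℓcard ▸ hqM)
  have hsd : S.filter (fun b => ¬ ∃ y ∈ b, y ∈ ℓ) = S \ M := by
    rw [hM, Finset.filter_not]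
  rw [hsd, Finset.card_sdiff_of_subset (Finset.filter_subset _ _), hScard, hMq]; omega

lemma upper_bound {X : Finset α} {Bl : Finset (Finset α)} {q : ℕ} (hq : 2 ≤ q)
    (hD : IsDesign X Bl (q^2) q 1) :
    ∃ P L, IsDomSet X Bl P L ∧ P.card + L.card = 2 * q - 1 := by
  classical
  have hBlne : Bl.Nonempty := by
    rw [← Finset.card_pos, block_count hq hD]; positivity
  obtain ⟨ℓ, hℓ⟩ := hBlne
  set L := Bl.filter (fun b => ¬ ∃ y ∈ b, y ∈ ℓ) with hLdef
  have hℓX := hD.block_subset ℓ hℓ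
  have hℓcard : ℓ.card = q := hD.block_card ℓ hℓ
  have hfil : ∀ x, L.filter (fun b => x ∈ b)
      = (Bl.filter (fun b => x ∈ b)).filter (fun b => ¬ ∃ y ∈ b, y ∈ ℓ) := by
    intro x
    rw [hLdef, Finset.filter_comm]
  have hdom1 : ∀ x ∈ X, x ∉ ℓ → ∃ b ∈ L, x ∈ b := by
    intro x hx hxℓ
    have h := parallel_unique hq hD hℓ hx hxℓ
    rw [← hfil] at h
    obtain ⟨b, hb⟩ := Finset.card_pos.1 (h ▸ Nat.one_pos)
    obtain ⟨hbL, hxb⟩ := mem_filter.1 hb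
    exact ⟨b, hbL, hxb⟩
  have hLcard : L.card = q - 1 := by
    have key := double_count (X \ ℓ) L (fun x b => x ∈ b)
    have hLHS : ∑ x ∈ X \ ℓ, (L.filter (fun b => x ∈ b)).card = q^2 - q := by
      have h1 : ∀ x ∈ X \ ℓ, (L.filter (fun b => x ∈ b)).card = 1 := by
        intro x hx
        obtain ⟨hxX, hxℓ⟩ := Finset.mem_sdiff.1 hx
        rw [hfil]
        exact parallel_unique hq hD hℓ hxX hxℓ
      rw [Finset.sum_congr rfl h1, Finset.sum_const, smul_eq_mul, mul_one,
        Finset.card_sdiff_of_subset hℓX, hD.card_points, hℓcard]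
    have hRHS : ∑ b ∈ L, ((X \ ℓ).filter (fun a => a ∈ b)).card = L.card * q := by
      have h1 : ∀ b ∈ L, ((X \ ℓ).filter (fun a => a ∈ b)).card = q := by
        intro b hb
        obtain ⟨hbB, hbd⟩ := mem_filter.1 hb
        push_neg at hbd
        have he : (X \ ℓ).filter (fun a => a ∈ b) = b := by
          ext y
          simp only [mem_filter, Finset.mem_sdiff]
          exact ⟨fun h => h.2, fun h => ⟨⟨hD.block_subset b hbB h, hbd y h⟩, h⟩⟩
        rw [he, hD.block_card b hbB]
      rw [Finset.sum_congr rfl h1, Finset.sum_const, smul_eq_mul]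
    rw [hLHS, hRHS] at key
    have hmm : (q - 1) * q + q = q ^ 2 := by
      obtain ⟨m, rfl⟩ := Nat.exists_eq_add_of_le hq
      have h1 : 2 + m - 1 = m + 1 := by omega
      rw [h1, pow_two]; ring
    have : L.card * q = (q - 1) * q := by omega
    exact Nat.eq_of_mul_eq_mul_right (by omega) this
  refine ⟨ℓ, L, ⟨hℓX, Finset.filter_subset _ _, hdom1, ?_⟩, by omega⟩
  intro b hb hbL
  rw [hLdef, mem_filter, not_and, not_not] at hbL
  obtain ⟨y, hyb, hyℓ⟩ := hbL hb
  exact ⟨y, hyℓ, hyb⟩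

theorem stmt_14 (X : Finset α) (Bl : Finset (Finset α)) (q : ℕ) (hq : 2 ≤ q)
    (hD : IsDesign X Bl (q ^ 2) q 1) :
    gamma X Bl = 2 * q - 1 := by
  obtain ⟨P, L, hdom, hcard⟩ := upper_bound hq hD
  apply le_antisymm
  · exact Nat.sInf_le ⟨P, L, hdom, hcard⟩
  · have hne : {n | ∃ P L, IsDomSet X Bl P L ∧ P.card + L.card = n}.Nonempty :=
      ⟨2 * q - 1, P, L, hdom, hcard⟩
    obtain ⟨P', L', hdom', hc'⟩ := Nat.sInf_mem hne
    rw [gamma, ← hc']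
    exact lower_bound hq hD hdom'
end

section
/- Let D = (X, 𝓑) be a symmetric 2-(v,k,λ) design, let S be a minimum dominating set of the incidence graph G_D, let P = S ∩ X, and suppose B₀ ∈ 𝓑 is a block with B₀ ∩ P = ∅ (so B₀ ∈ L̂(P), and hence B₀ ∈ S). Then S ∖ {B₀} is a dominating set of the incidence graph of the residual design Res(X, 𝓑, B₀); consequently γ(Res(X, 𝓑, B₀)) ≤ γ(D) − 1. -/
open Finset

variable {α : Type*} [DecidableEq α]

theorem stmt_18 (X : Finset α) (Bl : Finset (Finset α)) (v k lam : ℕ)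
    (hD : IsDesign X Bl v k lam) (hsym : Bl.card = v)
    (P : Finset α) (L : Finset (Finset α))
    (hS : IsDomSet X Bl P L) (hmin : P.card + L.card = gamma X Bl)
    (B₀ : Finset α) (hB₀ : B₀ ∈ Bl) (hdisj : B₀ ∩ P = ∅) :
    IsDomSet (X \ B₀) ((Bl.erase B₀).image (fun b => b \ B₀)) P
        ((L.erase B₀).image (fun b => b \ B₀)) ∧
      gamma (X \ B₀) ((Bl.erase B₀).image (fun b => b \ B₀)) ≤ gamma X Bl - 1 := by

  obtain ⟨hPX, hLB, hpt, hbl⟩ := hS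
  have hdisj' : ∀ x ∈ P, x ∉ B₀ := by
    intro x hx hxB
    have : x ∈ B₀ ∩ P := Finset.mem_inter.mpr ⟨hxB, hx⟩
    simp [hdisj] at this
  have hB₀L : B₀ ∈ L := by
    by_contra h
    obtain ⟨x, hxP, hxB⟩ := hbl B₀ hB₀ h
    exact hdisj' x hxP hxB
  have hdom : IsDomSet (X \ B₀) ((Bl.erase B₀).image (fun b => b \ B₀)) P
      ((L.erase B₀).image (fun b => b \ B₀)) := by
    refine ⟨?_, ?_, ?_, ?_⟩
    · intro x hx
      exact Finset.mem_sdiff.mpr ⟨hPX hx, hdisj' x hx⟩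
    · exact Finset.image_subset_image (Finset.erase_subset_erase _ hLB)
    · intro x hx hxP
      rcases Finset.mem_sdiff.mp hx with ⟨hxX, hxB₀⟩
      obtain ⟨b, hbL, hxb⟩ := hpt x hxX hxP
      refine ⟨b \ B₀, Finset.mem_image_of_mem _ (Finset.mem_erase.mpr ⟨?_, hbL⟩),
        Finset.mem_sdiff.mpr ⟨hxb, hxB₀⟩⟩
      rintro rfl; exact hxB₀ hxb
    · intro c hc hcL
      obtain ⟨b, hb, rfl⟩ := Finset.mem_image.mp hc
      rcases Finset.mem_erase.mp hb with ⟨hbne, hbBl⟩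
      have hbL : b ∉ L := by
        intro h
        exact hcL (Finset.mem_image_of_mem _ (Finset.mem_erase.mpr ⟨hbne, h⟩))
      obtain ⟨x, hxP, hxb⟩ := hbl b hbBl hbL
      exact ⟨x, hxP, Finset.mem_sdiff.mpr ⟨hxb, hdisj' x hxP⟩⟩
  refine ⟨hdom, ?_⟩
  have hle : gamma (X \ B₀) ((Bl.erase B₀).image (fun b => b \ B₀)) ≤
      P.card + ((L.erase B₀).image (fun b => b \ B₀)).card :=
    Nat.sInf_le ⟨P, _, hdom, rfl⟩
  have h1 : ((L.erase B₀).image (fun b => b \ B₀)).card ≤ (L.erase B₀).card :=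
    Finset.card_image_le
  have h2 : (L.erase B₀).card = L.card - 1 := Finset.card_erase_of_mem hB₀L
  have h3 : 1 ≤ L.card := Finset.card_pos.mpr ⟨B₀, hB₀L⟩
  omega
end

section
/- Let D = (X, 𝓑) be a 2-(v,k,λ) design in which every point lies in exactly r = λ(v−1)/(k−1) blocks, and let P ⊆ X be a set of points such that I_P = P ∪ L̂(P) is not a dominating set of the incidence graph G_D. Then |P| ≥ ⌈r/λ⌉. -/
open Finset

variable {α : Type*} [DecidableEq α]

theorem stmt_19 (X : Finset α) (Bl : Finset (Finset α)) (v k lam r : ℕ)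
    (hD : IsDesign X Bl v k lam)
    (hr : ∀ x ∈ X, (Bl.filter (fun b => x ∈ b)).card = r)
    (hrval : r * (k - 1) = lam * (v - 1))
    (P : Finset α) (hP : P ⊆ X)
    (hnd : ¬ IsDomSet X Bl P (Bl.filter (fun b => b ∩ P = ∅))) :
    ⌈(r : ℚ) / (lam : ℚ)⌉ ≤ (P.card : ℤ) := by
  -- From non-domination, extract a point x not in P such that every block
  -- through x meets P.
  obtain ⟨x, hxX, hxP, hx⟩ : ∃ x ∈ X, x ∉ P ∧ ∀ b ∈ Bl, x ∈ b → b ∩ P ≠ ∅ := by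
    by_contra h
    push_neg at h
    apply hnd
    refine ⟨hP, filter_subset _ _, ?_, ?_⟩
    · intro x hxX hxP
      obtain ⟨b, hb, hxb, hbP⟩ := h x hxX hxP
      exact ⟨b, mem_filter.mpr ⟨hb, hbP⟩, hxb⟩
    · intro b hb hbL
      have : b ∩ P ≠ ∅ := fun he => hbL (mem_filter.mpr ⟨hb, he⟩)
      obtain ⟨y, hy⟩ := nonempty_iff_ne_empty.mpr this
      rw [mem_inter] at hy
      exact ⟨y, hy.2, hy.1⟩
  -- Every block through x contains a point of P, so
  -- r = #blocks through x ≤ ∑_{p∈P} λ = |P| * λ.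
  have hsub : Bl.filter (fun b => x ∈ b) ⊆
      P.biUnion (fun p => Bl.filter (fun b => x ∈ b ∧ p ∈ b)) := by
    intro b hb
    rw [mem_filter] at hb
    obtain ⟨y, hy⟩ := nonempty_iff_ne_empty.mpr (hx b hb.1 hb.2)
    rw [mem_inter] at hy
    exact mem_biUnion.mpr ⟨y, hy.2, mem_filter.mpr ⟨hb.1, hb.2, hy.1⟩⟩
  have hle : r ≤ P.card * lam := by
    calc r = (Bl.filter (fun b => x ∈ b)).card := (hr x hxX).symm
    _ ≤ (P.biUnion (fun p => Bl.filter (fun b => x ∈ b ∧ p ∈ b))).card :=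
        card_le_card hsub
    _ ≤ ∑ p ∈ P, (Bl.filter (fun b => x ∈ b ∧ p ∈ b)).card := card_biUnion_le
    _ = ∑ p ∈ P, lam := by
        refine Finset.sum_congr rfl fun p hp => ?_
        exact hD.pair_count x hxX p (hP hp) (fun he => hxP (he ▸ hp))
    _ = P.card * lam := by rw [Finset.sum_const, smul_eq_mul]
  have hlam : (0 : ℚ) < lam := by exact_mod_cast hD.one_le_lam
  rw [Int.ceil_le, div_le_iff₀ hlam]
  push_cast
  exact_mod_cast hle
end
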